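/- Cache consistency is preserved by method redefinition: if X ∼ (TT, DT), then for any class-method id A.m and premethod λx.e, inv(X, A.m) ∼ (TT, DT[A.m ↦ λx.e]). -/

import Mathlib

set_option autoImplicit false
set_option maxHeartbeats 1000000

/-! Core Ruby-like language of "Just-in-Time Static Type Checking" (Hummingbird) -/

abbrev ClassId := String
abbrev MethName := String
abbrev MethKey := ClassId × MethName

inductive VarId where
  | named : String → VarId
  | self  : VarId
  | hole  : VarId
deriving DecidableEq

inductive Ty where
  | cls : ClassId → Ty
  | nil : Ty
deriving DecidableEq

abbrev MTy := Ty × Ty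

inductive Val where
  | vnil : Val
  | inst : ClassId → Val
deriving DecidableEq

inductive Exp where
  | val : Val → Exp
  | var : VarId → Exp
  | slf : Exp
  | assign : VarId → Exp → Exp
  | seq : Exp → Exp → Exp
  | new : ClassId → Exp
  | ite : Exp → Exp → Exp → Exp
  | call : Exp → MethName → Exp → Exp
  | defn : ClassId → MethName → VarId → Exp → Exp
  | tydecl : ClassId → MethName → MTy → Exp
deriving DecidableEq

/-- Subtyping on value types: nil ≤ τ and A ≤ A. -/
inductive TySub : Ty → Ty → Prop where
  | nil : ∀ τ, TySub Ty.nil τ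
  | refl : ∀ A, TySub (Ty.cls A) (Ty.cls A)

/-- Partial join of value types. -/
def Ty.join : Ty → Ty → Option Ty
  | .nil, τ => some τ
  | .cls A, .nil => some (.cls A)
  | .cls A, .cls B => if A = B then some (.cls A) else none

abbrev TEnv := VarId → Option Ty
abbrev TypTab := MethKey → Option MTy
abbrev DynEnv := VarId → Option Val
abbrev DynTab := MethKey → Option (VarId × Exp)

def upd {α β : Type} [DecidableEq α] (f : α → Option β) (a : α) (b : β) : α → Option β :=
  fun a' => if a' = a then some b else f a'

def emptyMap {α β : Type} : α → Option β := fun _ => none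

/-- Join of type environments: defined pointwise where both are defined and the type join is. -/
def tenvJoin (Γ₁ Γ₂ : TEnv) : TEnv := fun x =>
  match Γ₁ x, Γ₂ x with
  | some τ₁, some τ₂ => Ty.join τ₁ τ₂
  | _, _ => none

/-- Type environment subsumption Γ₁ ≤ Γ₂. -/
def TEnvLe (Γ₁ Γ₂ : TEnv) : Prop :=
  ∀ x τ₂, Γ₂ x = some τ₂ → ∃ τ₁, Γ₁ x = some τ₁ ∧ TySub τ₁ τ₂

/-- Run-time type of a value. -/
def Val.sty : Val → Ty
  | .vnil => Ty.nil
  | .inst A => Ty.cls A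

/-- The flow-sensitive typing judgment `TT ⊢ ⟨Γ, e⟩ ⇒ ⟨Γ', τ⟩`, parameterized by a set `F`
of forbidden method keys: rule TApp may not be applied with a key in `F`.  The paper's
plain judgment is obtained with `F = ∅`; `F = {A.m}` captures derivations that never
apply TApp with `A.m`. -/
inductive HasTy (tt : TypTab) (F : Set MethKey) : TEnv → Exp → TEnv → Ty → Prop where
  | tnil : ∀ Γ, HasTy tt F Γ (.val .vnil) Γ Ty.nil
  | tobj : ∀ Γ A, HasTy tt F Γ (.val (.inst A)) Γ (Ty.cls A)
  | tself : ∀ Γ τ, Γ VarId.self = some τ → HasTy tt F Γ .slf Γ τ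
  | tvar : ∀ Γ x τ, Γ x = some τ → HasTy tt F Γ (.var x) Γ τ
  | tseq : ∀ Γ e₁ Γ₁ τ₁ e₂ Γ₂ τ₂,
      HasTy tt F Γ e₁ Γ₁ τ₁ → HasTy tt F Γ₁ e₂ Γ₂ τ₂ →
      HasTy tt F Γ (.seq e₁ e₂) Γ₂ τ₂
  | tassn : ∀ Γ x e Γ' τ,
      HasTy tt F Γ e Γ' τ → HasTy tt F Γ (.assign x e) (upd Γ' x τ) τ
  | tnew : ∀ Γ A, HasTy tt F Γ (.new A) Γ (Ty.cls A)
  | tdef : ∀ Γ A m x e, HasTy tt F Γ (.defn A m x e) Γ Ty.nil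
  | ttype : ∀ Γ A m τm, HasTy tt F Γ (.tydecl A m τm) Γ Ty.nil
  | tapp : ∀ Γ e₀ Γ₀ A e₁ Γ₁ τ m τ₁ τ₂,
      HasTy tt F Γ e₀ Γ₀ (Ty.cls A) → HasTy tt F Γ₀ e₁ Γ₁ τ →
      tt (A, m) = some (τ₁, τ₂) → TySub τ τ₁ → (A, m) ∉ F →
      HasTy tt F Γ (.call e₀ m e₁) Γ₁ τ₂
  | tif : ∀ Γ e₀ Γ'' τ e₁ Γ₁ τ₁ e₂ Γ₂ τ₂ τj,
      HasTy tt F Γ e₀ Γ'' τ → HasTy tt F Γ'' e₁ Γ₁ τ₁ → HasTy tt F Γ'' e₂ Γ₂ τ₂ →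
      Ty.join τ₁ τ₂ = some τj →
      HasTy tt F Γ (.ite e₀ e₁ e₂) (tenvJoin Γ₁ Γ₂) τj

/-- Evaluation contexts C ::= □ | x = C | C.m(e) | v.m(C) | C; e | if C then e else e -/
inductive Ctx where
  | hole : Ctx
  | assign : VarId → Ctx → Ctx
  | callL : Ctx → MethName → Exp → Ctx
  | callR : Val → MethName → Ctx → Ctx
  | seq : Ctx → Exp → Ctx
  | ite : Ctx → Exp → Exp → Ctx
deriving DecidableEq

/-- C[e] -/
def Ctx.plug : Ctx → Exp → Exp
  | .hole, e => e
  | .assign x C, e => .assign x (C.plug e)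
  | .callL C m e₁, e => .call (C.plug e) m e₁
  | .callR v m C, e => .call (.val v) m (C.plug e)
  | .seq C e₂, e => .seq (C.plug e) e₂
  | .ite C e₁ e₂, e => .ite (C.plug e) e₁ e₂

/-- A context viewed as an expression, with the hole □ treated as a variable. -/
def Ctx.toExp (C : Ctx) : Exp := C.plug (.var VarId.hole)

/-- A cache entry records the statement of the stored typing derivation
`D_M = (tt ⊢ ⟨Γ, body⟩ ⇒ ⟨Γ', τ⟩)` and subtyping derivation `D_≤ = (τ ≤ τ₂)`. -/
structure CacheEntry where
  tt : TypTab
  Γ : TEnv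
  body : Exp
  Γ' : TEnv
  τ : Ty
  τ₂ : Ty

abbrev Cache := MethKey → Option CacheEntry

/-- The entry's typing derivation does not apply TApp with key `k`
(i.e., a derivation avoiding `k` exists). -/
def CacheEntry.avoids (en : CacheEntry) (k : MethKey) : Prop :=
  HasTy en.tt {k} en.Γ en.body en.Γ' en.τ

/-- Cache invalidation `inv(X, A.m)`: remove any entry keyed `A.m` and any entry whose
typing derivation applies TApp with `A.m`. -/
noncomputable def Cache.inv (X : Cache) (k : MethKey) : Cache := by
  classical
  exact fun k' =>
    if k' = k then none
    else
      match X k' with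
      | none => none
      | some en => if en.avoids k then some en else none

/-- Cache upgrading `upg(X, TT')`: replace the type table in every derivation by `TT'`. -/
def Cache.upg (X : Cache) (tt' : TypTab) : Cache := fun k =>
  (X k).map (fun en => { en with tt := tt' })

/-- The type environment [x ↦ τ₁, self ↦ A]. -/
def mkTEnv (x : VarId) (τ₁ : Ty) (A : ClassId) : TEnv :=
  upd (upd (emptyMap : TEnv) x τ₁) VarId.self (Ty.cls A)

/-- The dynamic environment [self ↦ v₁, x ↦ v₂]. -/
def mkDEnv (x : VarId) (v₂ : Val) (v₁ : Val) : DynEnv :=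
  upd (upd (emptyMap : DynEnv) x v₂) VarId.self v₁

/-- Cache consistency X ∼ (TT, DT). -/
def CacheCons (X : Cache) (tt : TypTab) (dt : DynTab) : Prop :=
  ∀ A m en, X (A, m) = some en →
    en.tt = tt ∧
    ∃ x τ₁,
      en.Γ = mkTEnv x τ₁ A ∧
      HasTy tt ∅ en.Γ en.body en.Γ' en.τ ∧
      TySub en.τ en.τ₂ ∧
      dt (A, m) = some (x, en.body) ∧
      tt (A, m) = some (τ₁, en.τ₂)

/-- Environment consistency Γ ∼ E. -/
def EnvCons (Γ : TEnv) (E : DynEnv) : Prop :=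
  ∀ x τx, Γ x = some τx →
    ∃ v τ, E x = some v ∧ HasTy (emptyMap : TypTab) ∅ Γ (.val v) Γ τ ∧ TySub τ τx

abbrev TSElt := TEnv × Ty × Ctx × TEnv × Ty
abbrev TStack := List TSElt
abbrev Stack := List (DynEnv × Ctx)

/-- Stack subtyping: τ₀ ≤ (Γ, τ, C, Γ', τ')::TS iff τ₀ ≤ τ. -/
def SubTS (τ₀ : Ty) : TStack → Prop
  | [] => True
  | (_, τ, _, _, _) :: _ => TySub τ₀ τ

/-- Stack consistency TT ⊢ TS ∼ S. -/
inductive StackCons (tt : TypTab) : TStack → Stack → Prop where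
  | nil : StackCons tt [] []
  | cons : ∀ Γ τ C Γ' τ' E TS S,
      EnvCons Γ E →
      HasTy tt ∅ (upd Γ VarId.hole τ) (Ctx.toExp C) Γ' τ' →
      StackCons tt TS S →
      (TS ≠ [] → SubTS τ' TS) →
      StackCons tt ((Γ, τ, C, Γ', τ') :: TS) ((E, C) :: S)

/-- Dynamic configuration ⟨X, TT, DT, E, e, S⟩. -/
structure Config where
  X : Cache
  tt : TypTab
  dt : DynTab
  env : DynEnv
  exp : Exp
  stk : Stack

/-- No typing derivation associated with the stack applies TApp with key `k`. -/
def StackAvoids (tt : TypTab) (S : Stack) (k : MethKey) : Prop :=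
  ∀ fr ∈ S, ∀ Γ Γ' τ',
    HasTy tt ∅ Γ (Ctx.toExp fr.2) Γ' τ' → HasTy tt {k} Γ (Ctx.toExp fr.2) Γ' τ'

/-- Small-step dynamic semantics. -/
inductive Step : Config → Config → Prop where
  | eself : ∀ X tt dt E S v, E VarId.self = some v →
      Step ⟨X, tt, dt, E, .slf, S⟩ ⟨X, tt, dt, E, .val v, S⟩
  | evar : ∀ X tt dt E S x v, E x = some v →
      Step ⟨X, tt, dt, E, .var x, S⟩ ⟨X, tt, dt, E, .val v, S⟩
  | eassn : ∀ X tt dt E S x v,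
      Step ⟨X, tt, dt, E, .assign x (.val v), S⟩ ⟨X, tt, dt, upd E x v, .val v, S⟩
  | enew : ∀ X tt dt E S A,
      Step ⟨X, tt, dt, E, .new A, S⟩ ⟨X, tt, dt, E, .val (.inst A), S⟩
  | eseq : ∀ X tt dt E S v e₂,
      Step ⟨X, tt, dt, E, .seq (.val v) e₂, S⟩ ⟨X, tt, dt, E, e₂, S⟩
  | eiftrue : ∀ X tt dt E S v e₁ e₂, v ≠ Val.vnil →
      Step ⟨X, tt, dt, E, .ite (.val v) e₁ e₂, S⟩ ⟨X, tt, dt, E, e₁, S⟩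
  | eiffalse : ∀ X tt dt E S e₁ e₂,
      Step ⟨X, tt, dt, E, .ite (.val .vnil) e₁ e₂, S⟩ ⟨X, tt, dt, E, e₂, S⟩
  | edef : ∀ X tt dt E S A m x e,
      Step ⟨X, tt, dt, E, .defn A m x e, S⟩
           ⟨X.inv (A, m), tt, upd dt (A, m) (x, e), E, .val .vnil, S⟩
  | etype : ∀ X tt dt E S A m τm,
      StackAvoids tt S (A, m) →
      Step ⟨X, tt, dt, E, .tydecl A m τm, S⟩
           ⟨(X.inv (A, m)).upg (upd tt (A, m) τm), upd tt (A, m) τm, dt, E, .val .vnil, S⟩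
  | eappmiss : ∀ X tt dt E S C A m v₂ x body τ₁ τ₂ Γ' τ,
      X (A, m) = none →
      dt (A, m) = some (x, body) →
      tt (A, m) = some (τ₁, τ₂) →
      TySub v₂.sty τ₁ →
      HasTy tt ∅ (mkTEnv x τ₁ A) body Γ' τ →
      TySub τ τ₂ →
      Step ⟨X, tt, dt, E, C.plug (.call (.val (.inst A)) m (.val v₂)), S⟩
           ⟨upd X (A, m) ⟨tt, mkTEnv x τ₁ A, body, Γ', τ, τ₂⟩, tt, dt,
            mkDEnv x v₂ (.inst A), body, (E, C) :: S⟩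
  | eapphit : ∀ X tt dt E S C A m v₂ x body τ₁ τ₂ en,
      X (A, m) = some en →
      dt (A, m) = some (x, body) →
      tt (A, m) = some (τ₁, τ₂) →
      TySub v₂.sty τ₁ →
      Step ⟨X, tt, dt, E, C.plug (.call (.val (.inst A)) m (.val v₂)), S⟩
           ⟨X, tt, dt, mkDEnv x v₂ (.inst A), body, (E, C) :: S⟩
  | eret : ∀ X tt dt E' v E C S,
      Step ⟨X, tt, dt, E', .val v, (E, C) :: S⟩ ⟨X, tt, dt, E, C.plug (.val v), S⟩
  | econtext : ∀ (X : Cache) (tt : TypTab) (dt : DynTab) (E : DynEnv) (e : Exp)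
      (S : Stack) (X' : Cache) (tt' : TypTab) (dt' : DynTab) (E' : DynEnv) (e' : Exp)
      (S' : Stack) (C : Ctx),
      Step ⟨X, tt, dt, E, e, S⟩ ⟨X', tt', dt', E', e', S'⟩ →
      (∀ v, e ≠ .val v) →
      (∀ (C' : Ctx) (v₁ : Val) (m : MethName) (v₂ : Val),
        e ≠ Ctx.plug C' (.call (.val v₁) m (.val v₂))) →
      Step ⟨X, tt, dt, E, Ctx.plug C e, S⟩ ⟨X', tt', dt', E', Ctx.plug C e', S'⟩

/-- Blame rules: invoking a method on nil; calling a method whose body fails the static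
type check required by EAppMiss; calling a method with a type signature but no definition. -/
inductive StepBlame : Config → Prop where
  | nilCall : ∀ X tt dt E S C m v₂,
      StepBlame ⟨X, tt, dt, E, Ctx.plug C (.call (.val .vnil) m (.val v₂)), S⟩
  | noDef : ∀ X tt dt E S C A m v₂ τm,
      tt (A, m) = some τm → dt (A, m) = none →
      StepBlame ⟨X, tt, dt, E, Ctx.plug C (.call (.val (.inst A)) m (.val v₂)), S⟩
  | noCheck : ∀ X tt dt E S C A m v₂ x body τ₁ τ₂,
      X (A, m) = none →
      dt (A, m) = some (x, body) →
      tt (A, m) = some (τ₁, τ₂) →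
      ¬ (∃ Γ' τ, HasTy tt ∅ (mkTEnv x τ₁ A) body Γ' τ ∧ TySub τ τ₂) →
      StepBlame ⟨X, tt, dt, E, Ctx.plug C (.call (.val (.inst A)) m (.val v₂)), S⟩

/-- A typing derivation of `tt ⊢ ⟨Γ, C[e]⟩ ⇒ ⟨Γ', τ⟩` whose subderivation at the position
of the hole of `C` is `tt ⊢ ⟨Γh, e⟩ ⇒ ⟨Γh, τh⟩`. -/
inductive CtxDeriv (tt : TypTab) (e : Exp) (Γh : TEnv) (τh : Ty) :
    TEnv → Ctx → TEnv → Ty → Prop where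
  | hole : HasTy tt ∅ Γh e Γh τh → CtxDeriv tt e Γh τh Γh Ctx.hole Γh τh
  | assign : ∀ x Γ C Γ' τ,
      CtxDeriv tt e Γh τh Γ C Γ' τ →
      CtxDeriv tt e Γh τh Γ (Ctx.assign x C) (upd Γ' x τ) τ
  | callL : ∀ Γ C Γ₀ A e₁ Γ₁ τ m τ₁ τ₂,
      CtxDeriv tt e Γh τh Γ C Γ₀ (Ty.cls A) →
      HasTy tt ∅ Γ₀ e₁ Γ₁ τ →
      tt (A, m) = some (τ₁, τ₂) → TySub τ τ₁ →
      CtxDeriv tt e Γh τh Γ (Ctx.callL C m e₁) Γ₁ τ₂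
  | callR : ∀ Γ v Γ₀ A C Γ₁ τ m τ₁ τ₂,
      HasTy tt ∅ Γ (Exp.val v) Γ₀ (Ty.cls A) →
      CtxDeriv tt e Γh τh Γ₀ C Γ₁ τ →
      tt (A, m) = some (τ₁, τ₂) → TySub τ τ₁ →
      CtxDeriv tt e Γh τh Γ (Ctx.callR v m C) Γ₁ τ₂
  | seq : ∀ Γ C Γ₁ τ₁ e₂ Γ₂ τ₂,
      CtxDeriv tt e Γh τh Γ C Γ₁ τ₁ →
      HasTy tt ∅ Γ₁ e₂ Γ₂ τ₂ →
      CtxDeriv tt e Γh τh Γ (Ctx.seq C e₂) Γ₂ τ₂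
  | ite : ∀ Γ C Γ'' τ e₁ Γ₁ τ₁ e₂ Γ₂ τ₂ τj,
      CtxDeriv tt e Γh τh Γ C Γ'' τ →
      HasTy tt ∅ Γ'' e₁ Γ₁ τ₁ →
      HasTy tt ∅ Γ'' e₂ Γ₂ τ₂ →
      Ty.join τ₁ τ₂ = some τj →
      CtxDeriv tt e Γh τh Γ (Ctx.ite C e₁ e₂) (tenvJoin Γ₁ Γ₂) τj

theorem upd_apply_of_ne {α β : Type} [DecidableEq α] (f : α → Option β) {a a' : α} (b : β)
    (h : a' ≠ a) : upd f a b a' = f a' :=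
  if_neg h

theorem Cache.inv_eq_some_iff {X : Cache} {k k' : MethKey} {en : CacheEntry} :
    X.inv k k' = some en ↔ k' ≠ k ∧ X k' = some en ∧ en.avoids k := by
  unfold Cache.inv
  by_cases hk : k' = k
  · simp [hk]
  · rcases hX : X k' with _ | en'
    · simp [hk]
    · by_cases hav : en'.avoids k <;> simp only [hk, hav, if_false, if_true] <;> grind

theorem CacheCons.mono {X X' : Cache} {tt : TypTab} {dt dt' : DynTab} (h : CacheCons X tt dt)
    (hsub : ∀ k en, X' k = some en → X k = some en ∧ dt' k = dt k) :
    CacheCons X' tt dt' := by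
  intro A m en hen
  obtain ⟨hX, hdt⟩ := hsub (A, m) en hen
  rw [hdt]
  exact h A m en hX

/-- Cache consistency is preserved by method redefinition: if X ∼ (TT, DT), then
inv(X, A.m) ∼ (TT, DT[A.m ↦ λx.e]). -/
theorem cacheCons_inv_def
    (X : Cache) (tt : TypTab) (dt : DynTab) (h : CacheCons X tt dt)
    (A : ClassId) (m : MethName) (x : VarId) (e : Exp) :
    CacheCons (Cache.inv X (A, m)) tt (upd dt (A, m) (x, e)) := by
  refine h.mono fun k en hen => ?_
  obtain ⟨hk, hX, -⟩ := Cache.inv_eq_some_iff.mp hen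
  exact ⟨hX, upd_apply_of_ne dt _ hk⟩
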